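/- arXiv:2110.03604 — 5 statements merged into one kernel-verified Lean document; each statement's English description precedes it below -/
import Mathlib

section
/- Under the mixing assumption ‖dP(π) − d'P(π)‖_1 ≤ e^{−1/τ}·‖d − d'‖_1, for any fixed policy π with stationary distribution d_π, any initial distribution, and any sequence of loss vectors l_t ∈ [0,1]^n, the cumulative deviation satisfies Σ_{t=1}^T |⟨l_t, d_π − v_t^π⟩| ≤ 2τ + 2, where v_t^π is the state-action occupancy distribution at time t under π. -/
open Real Finset

/-! The distance to the stationary distribution is at most `2` at the start and contracts by
`exp (-1/τ)` per step, so the deviation at time `t` is at most `2 exp (-t/τ)`; the geometric series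
of these terms is at most `2 (1 + τ)` because `exp (1/τ) ≥ 1 + 1/τ`. -/

lemma abs_sum_mul_le_sum_abs {ι : Type*} (s : Finset ι) {l x : ι → ℝ}
    (hl : ∀ i ∈ s, |l i| ≤ 1) : |∑ i ∈ s, l i * x i| ≤ ∑ i ∈ s, |x i| :=
  calc |∑ i ∈ s, l i * x i| ≤ ∑ i ∈ s, |l i * x i| := abs_sum_le_sum_abs _ _
    _ ≤ ∑ i ∈ s, |x i| := sum_le_sum fun i hi => by
        rw [abs_mul]
        exact mul_le_of_le_one_left (abs_nonneg _) (hl i hi)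

lemma sum_abs_sub_le_two_of_mem_stdSimplex {ι : Type*} [Fintype ι] {p q : ι → ℝ}
    (hp : p ∈ stdSimplex ℝ ι) (hq : q ∈ stdSimplex ℝ ι) : ∑ i, |p i - q i| ≤ 2 :=
  calc ∑ i, |p i - q i| ≤ ∑ i, (p i + q i) :=
        sum_le_sum fun i _ => (abs_sub _ _).trans_eq <| by
          rw [abs_of_nonneg (hp.1 i), abs_of_nonneg (hq.1 i)]
    _ = 2 := by rw [sum_add_distrib, hp.2, hq.2]; norm_num

lemma le_pow_mul_of_contraction_iterate {α : Type*} {S : Set α} {F : α → α} {D : α → α → ℝ}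
    {r : ℝ} (hr : 0 ≤ r) (hS : Set.MapsTo F S S)
    (hF : ∀ x ∈ S, ∀ y ∈ S, D (F x) (F y) ≤ r * D x y) {x y : α} (hx : x ∈ S) (hy : y ∈ S)
    (t : ℕ) : D (F^[t] x) (F^[t] y) ≤ r ^ t * D x y := by
  induction t with
  | zero => simp
  | succ t ih =>
    rw [Function.iterate_succ_apply', Function.iterate_succ_apply']
    calc D (F (F^[t] x)) (F (F^[t] y)) ≤ r * D (F^[t] x) (F^[t] y) :=
          hF _ (hS.iterate t hx) _ (hS.iterate t hy)
      _ ≤ r * (r ^ t * D x y) := mul_le_mul_of_nonneg_left ih hr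
      _ = r ^ (t + 1) * D x y := by ring

lemma exp_neg_inv_mul_one_add_le {τ : ℝ} (hτ : 0 < τ) : exp (-1 / τ) * (1 + τ) ≤ τ := by
  have hexp : exp (-1 / τ) * exp (1 / τ) = 1 := by rw [← exp_add, neg_div, neg_add_cancel, exp_zero]
  have hle : 1 / τ + 1 ≤ exp (1 / τ) := add_one_le_exp _
  calc exp (-1 / τ) * (1 + τ) = exp (-1 / τ) * (1 / τ + 1) * τ := by field_simp
    _ ≤ exp (-1 / τ) * exp (1 / τ) * τ := by gcongr
    _ = τ := by rw [hexp, one_mul]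

lemma geom_sum_exp_neg_inv_le {τ : ℝ} (hτ : 0 < τ) (T : ℕ) :
    ∑ t ∈ range T, exp (-1 / τ) ^ t ≤ 1 + τ := by
  have hr1 : exp (-1 / τ) < 1 := exp_lt_one_iff.mpr (div_neg_of_neg_of_pos (by norm_num) hτ)
  calc ∑ t ∈ range T, exp (-1 / τ) ^ t ≤ exp (-1 / τ) ^ 0 / (1 - exp (-1 / τ)) := by
        rw [range_eq_Ico]; exact geom_sum_Ico_le_of_lt_one (exp_pos _).le hr1
    _ ≤ 1 + τ := by
        rw [pow_zero, div_le_iff₀ (sub_pos.mpr hr1)]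
        linarith [exp_neg_inv_mul_one_add_le hτ]

-- `v 0` is the paper's `v_1^π`: the occupancy at the first time step.
/-- Under the mixing assumption, for a fixed policy with stationary distribution d_π, any
initial distribution and losses in [0,1], the cumulative deviation between the stationary
loss and the occupancy loss is at most 2τ + 2 (here `v 0` is the occupancy at time 1). -/
theorem stmt_5 {n : ℕ} (τ : ℝ) (hτ : 0 < τ)
    (F : (Fin n → ℝ) → (Fin n → ℝ))
    (hFdist : ∀ d : Fin n → ℝ, (∀ i, 0 ≤ d i) → (∑ i, d i) = 1 →
        (∀ i, 0 ≤ F d i) ∧ (∑ i, F d i) = 1)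
    (hFcontr : ∀ d d' : Fin n → ℝ, (∀ i, 0 ≤ d i) → (∑ i, d i) = 1 →
        (∀ i, 0 ≤ d' i) → (∑ i, d' i) = 1 →
        ∑ i, |F d i - F d' i| ≤ Real.exp (-1 / τ) * ∑ i, |d i - d' i|)
    (dπ : Fin n → ℝ) (hdπ0 : ∀ i, 0 ≤ dπ i) (hdπ1 : ∑ i, dπ i = 1)
    (hstat : F dπ = dπ)
    (v : ℕ → Fin n → ℝ) (hv0 : ∀ i, 0 ≤ v 0 i) (hv0' : ∑ i, v 0 i = 1)
    (hrec : ∀ t, v (t + 1) = F (v t))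
    (l : ℕ → Fin n → ℝ) (hl : ∀ t i, l t i ∈ Set.Icc (0 : ℝ) 1)
    (T : ℕ) :
    ∑ t ∈ Finset.range T, |∑ i, l t i * (dπ i - v t i)| ≤ 2 * τ + 2 := by
  have hv : ∀ t, v t = F^[t] (v 0) := fun t => by
    induction t with
    | zero => rfl
    | succ t ih => rw [hrec, ih, Function.iterate_succ_apply']
  have hdist : ∀ t, ∑ i, |dπ i - v t i| ≤ exp (-1 / τ) ^ t * 2 := fun t => by
    rw [hv, ← Function.iterate_fixed hstat t]
    refine (le_pow_mul_of_contraction_iterate (S := stdSimplex ℝ (Fin n))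
      (D := fun d d' => ∑ i, |d i - d' i|) (exp_pos _).le (fun d hd => hFdist d hd.1 hd.2)
      (fun d hd d' hd' => hFcontr d d' hd.1 hd.2 hd'.1 hd'.2) ⟨hdπ0, hdπ1⟩ ⟨hv0, hv0'⟩ t).trans ?_
    exact mul_le_mul_of_nonneg_left
      (sum_abs_sub_le_two_of_mem_stdSimplex ⟨hdπ0, hdπ1⟩ ⟨hv0, hv0'⟩) (by positivity)
  calc ∑ t ∈ range T, |∑ i, l t i * (dπ i - v t i)|
      ≤ ∑ t ∈ range T, exp (-1 / τ) ^ t * 2 := sum_le_sum fun t _ =>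
        (abs_sum_mul_le_sum_abs _ fun i _ => abs_le.mpr
          ⟨by linarith [(hl t i).1], (hl t i).2⟩).trans (hdist t)
    _ = 2 * ∑ t ∈ range T, exp (-1 / τ) ^ t := by rw [← sum_mul, mul_comm]
    _ ≤ 2 * (1 + τ) := by gcongr; exact geom_sum_exp_neg_inv_le hτ T
    _ = 2 * τ + 2 := by ring
end

section
/- Assume every policy's stationary distribution has full support on states. If there exists a state s with Q_{π*,l}(s, π*) > min_{π} Q_{π*,l}(s, π), then the greedy policy π' defined by π'(s) ∈ argmin_{a∈A} Q_{π*,l}(s,a) for all s satisfies η_l(π') < η_l(π*); in particular if additionally η_l(π*) ≤ v then η_l(π') < v. -/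
open Real

/-! By the performance-difference identity, `η π' - η π*` is a sum over states of
`d_{π'}(s) (Q(s, π') - Q(s, π*))`. Greediness makes every term nonpositive, and the state with a
strict improvement contributes a strictly negative term, since `d_{π'}` has full support. -/

theorem Finset.sum_mul_neg_of_pos_of_nonpos {ι R : Type*} [Fintype ι] [Ring R] [LinearOrder R]
    [IsStrictOrderedRing R] (w f : ι → R) (hw : ∀ i, 0 < w i) (hf : ∀ i, f i ≤ 0)
    (hneg : ∃ i, f i < 0) : ∑ i, w i * f i < 0 := by
  obtain ⟨j, hj⟩ := hneg
  calc ∑ i, w i * f i < ∑ _i : ι, (0 : R) :=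
        Finset.sum_lt_sum (fun i _ => mul_nonpos_of_nonneg_of_nonpos (hw i).le (hf i))
          ⟨j, Finset.mem_univ j, mul_neg_of_pos_of_neg (hw j) hj⟩
    _ = 0 := Finset.sum_const_zero

/-- If every stationary state distribution has full support and some state admits a strict
improvement over π* in the relative Q-values, then the greedy policy π' has strictly
smaller average loss than π*; in particular, if η(π*) ≤ v then η(π') < v. -/
theorem stmt_13 {nS : ℕ} (Pol : Type*) (πstar π' : Pol)
    (stateDist : Pol → Fin nS → ℝ) (hsd : ∀ p s, 0 < stateDist p s)
    (η : Pol → ℝ) (v : ℝ)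
    (Q : Fin nS → Pol → ℝ)
    (hkey : ∀ p, η p - η πstar = ∑ s, stateDist p s * (Q s p - Q s πstar))
    (hgreedy : ∀ s p, Q s π' ≤ Q s p)
    (hstrict : ∃ s, Q s π' < Q s πstar) :
    η π' < η πstar ∧ (η πstar ≤ v → η π' < v) := by
  have hdiff : η π' - η πstar < 0 := by
    rw [hkey π']
    refine Finset.sum_mul_neg_of_pos_of_nonpos _ _ (hsd π') (fun s => ?_) ?_
    · exact sub_nonpos.mpr (hgreedy s πstar)
    · obtain ⟨s, hs⟩ := hstrict
      exact ⟨s, sub_neg.mpr hs⟩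
  have himprove : η π' < η πstar := sub_neg.mp hdiff
  exact ⟨himprove, himprove.trans_le⟩
end

section
/- Under the MWU update l_{t+1}(i) = l_t(i)·exp(μ_t⟨e_i, d_{π_t}⟩)/Z_t with the agent playing the equilibrium strategy d_{π*} at round 2k−1, the relative entropy to an adversary equilibrium l* does not increase in that round: RE(l*‖l_{2k}) − RE(l*‖l_{2k−1}) ≤ 0. -/
/-!
Only the agent's equilibrium play enters the update, so the relative entropy changes by
`∑ l*ᵢ (log Z - μ d*ᵢ)` with `Z = ∑ qⱼ exp (μ d*ⱼ)`. Every coordinate satisfies `d*ᵢ ≤ v`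
(test the agent's guarantee on vertices of the simplex), hence `Z ≤ exp (μ v)`, and the change
is at most `μ (v - ⟨l*, d*⟩) ≤ 0` by the adversary's guarantee.
-/

open Real

noncomputable def dot {n : ℕ} (x y : Fin n → ℝ) : ℝ := ∑ i, x i * y i

open Finset

lemma apply_le_of_forall_mem_stdSimplex_dot_le {n : ℕ} {d : Fin n → ℝ} {v : ℝ}
    (h : ∀ p ∈ stdSimplex ℝ (Fin n), dot p d ≤ v) (i : Fin n) : d i ≤ v := by
  simpa [dot, Pi.single_apply] using h _ (single_mem_stdSimplex ℝ i)

section Partition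

variable {ι : Type*} [Fintype ι] {q : ι → ℝ} (g : ι → ℝ)

lemma sum_mul_exp_pos_of_mem_stdSimplex (hq : q ∈ stdSimplex ℝ ι) :
    0 < ∑ j, q j * exp (g j) := by
  obtain ⟨j, -, hj⟩ := exists_lt_of_sum_lt (s := univ) (f := 0) (g := q)
    (by simp [hq.2])
  exact sum_pos' (fun k _ => mul_nonneg (hq.1 k) (exp_pos _).le)
    ⟨j, mem_univ j, mul_pos hj (exp_pos _)⟩

lemma sum_mul_exp_le_of_mem_stdSimplex (hq : q ∈ stdSimplex ℝ ι) {c : ℝ} (hg : ∀ j, g j ≤ c) :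
    ∑ j, q j * exp (g j) ≤ exp c :=
  calc ∑ j, q j * exp (g j) ≤ ∑ j, q j * exp c :=
        sum_le_sum fun j _ => mul_le_mul_of_nonneg_left (exp_le_exp.2 (hg j)) (hq.1 j)
    _ = exp c := by rw [← sum_mul, hq.2, one_mul]

end Partition

lemma mul_log_div_mul_exp_div_sub_le {l q Z a c : ℝ} (hl : 0 ≤ l) (hZ : 0 < Z)
    (hZc : log Z ≤ c) (hac : a ≤ c) :
    l * log (l / (q * exp a / Z)) - l * log (l / q) ≤ l * (c - a) := by
  -- If `l = 0` or `q = 0`, both logarithms are of `0` (junk value `log 0 = 0`).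
  by_cases h : l / q = 0
  · have h' : l / (q * exp a / Z) = 0 := by
      rcases div_eq_zero_iff.1 h with h | h <;> simp [h]
    rw [h, h', sub_self]
    exact mul_nonneg hl (sub_nonneg.2 hac)
  · have hlq : l / (q * exp a / Z) = l / q * exp (log Z - a) := by
      obtain ⟨hl0, hq0⟩ : l ≠ 0 ∧ q ≠ 0 := by simpa [not_or] using h
      rw [exp_sub, exp_log hZ]
      field_simp
    rw [hlq, log_mul h (exp_ne_zero _), log_exp, ← mul_sub]
    exact mul_le_mul_of_nonneg_left (by linarith) hl

/-- One MWU step taken while the agent plays the equilibrium distribution d_{π*} does not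
increase the relative entropy to an adversary equilibrium l*. -/
theorem stmt_15 {n : ℕ} (q lstar dstar : Fin n → ℝ)
    (hq : q ∈ stdSimplex ℝ (Fin n)) (hlstar : lstar ∈ stdSimplex ℝ (Fin n))
    (μ v : ℝ) (hμ : 0 ≤ μ)
    (hv1 : ∀ p ∈ stdSimplex ℝ (Fin n), dot p dstar ≤ v)
    (hv2 : v ≤ dot lstar dstar)
    (q' : Fin n → ℝ)
    (hq' : ∀ i, q' i = q i * Real.exp (μ * dstar i) / ∑ j, q j * Real.exp (μ * dstar j)) :
    (∑ i, lstar i * Real.log (lstar i / q' i))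
      - (∑ i, lstar i * Real.log (lstar i / q i)) ≤ 0 := by
  have hd := apply_le_of_forall_mem_stdSimplex_dot_le hv1
  have hZ := sum_mul_exp_pos_of_mem_stdSimplex (fun j => μ * dstar j) hq
  have hlogZ : log (∑ j, q j * exp (μ * dstar j)) ≤ μ * v :=
    (log_le_iff_le_exp hZ).2 <| sum_mul_exp_le_of_mem_stdSimplex _ hq fun j =>
      mul_le_mul_of_nonneg_left (hd j) hμ
  calc (∑ i, lstar i * log (lstar i / q' i)) - ∑ i, lstar i * log (lstar i / q i)
      = ∑ i, (lstar i * log (lstar i / q' i) - lstar i * log (lstar i / q i)) :=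
        (sum_sub_distrib ..).symm
    _ ≤ ∑ i, lstar i * (μ * v - μ * dstar i) := sum_le_sum fun i _ => by
        rw [hq' i]
        exact mul_log_div_mul_exp_div_sub_le (hlstar.1 i) hZ hlogZ
          (mul_le_mul_of_nonneg_left (hd i) hμ)
    _ = μ * (v - dot lstar dstar) := by
        simp only [mul_sub, sum_sub_distrib, ← sum_mul, hlstar.2, dot, mul_sum]
        ring_nf
    _ ≤ 0 := mul_nonpos_of_nonneg_of_nonpos hμ (by linarith)
end

section
/- For the MWU algorithm over n experts with losses in [0,1] and fixed learning rate μ = √(8·log(n)/T), the expected regret after T rounds is at most √(T·log(n)/2); if losses are instead bounded by M, the regret is at most M·√(T·log(n)/2). -/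
open Real

lemma hoeffding_core (p : ℝ) (hp0 : 0 ≤ p) (hp1 : p ≤ 1) (h : ℝ) (hh : 0 ≤ h) :
    Real.log (1 - p + p * Real.exp (-h)) ≤ -p * h + h ^ 2 / 8 := by
  set D : ℝ → ℝ := fun x => 1 - p + p * Real.exp (-x) with hDdef
  have hD : ∀ x, 0 < D x := by
    intro x
    show 0 < 1 - p + p * Real.exp (-x)
    have he := Real.exp_pos (-x)
    rcases le_or_gt (Real.exp (-x)) 1 with h1 | h1
    · nlinarith
    · nlinarith
  set G : ℝ → ℝ := fun x => x ^ 2 / 8 - p * x - Real.log (D x) with hGdef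
  set G' : ℝ → ℝ := fun x => x / 4 - p + p * Real.exp (-x) / D x with hG'def
  have hDderiv : ∀ x, HasDerivAt D (-(p * Real.exp (-x))) x := by
    intro x
    have : HasDerivAt (fun x : ℝ => Real.exp (-x)) (-Real.exp (-x)) x := by
      simpa using ((hasDerivAt_neg x).exp)
    simpa [mul_comm, mul_assoc, hDdef] using ((this.const_mul p).const_add (1 - p))
  have hGderiv : ∀ x, HasDerivAt G (G' x) x := by
    intro x
    have h1 : HasDerivAt (fun x : ℝ => x ^ 2 / 8 - p * x) (x / 4 - p) x := by
      have := ((hasDerivAt_pow 2 x).div_const 8).sub ((hasDerivAt_id x).const_mul p)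
      exact this.congr_deriv (by norm_num; ring)
    have h2 : HasDerivAt (fun x => Real.log (D x)) (-(p * Real.exp (-x)) / D x) x :=
      (hDderiv x).log (hD x).ne'
    have := h1.sub h2
    exact this.congr_deriv (by simp [hG'def]; ring)
  have hG'deriv : ∀ x, HasDerivAt G' (1 / 4 - p * (1 - p) * Real.exp (-x) / (D x) ^ 2) x := by
    intro x
    have h1 : HasDerivAt (fun x : ℝ => x / 4 - p) (1 / 4) x := by
      simpa using ((hasDerivAt_id x).div_const 4).sub_const p
    have hnum : HasDerivAt (fun x : ℝ => p * Real.exp (-x)) (-(p * Real.exp (-x))) x := by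
      have : HasDerivAt (fun x : ℝ => Real.exp (-x)) (-Real.exp (-x)) x := by
        simpa using ((hasDerivAt_neg x).exp)
      simpa [mul_comm, mul_assoc] using this.const_mul p
    have h2 := hnum.div (hDderiv x) (hD x).ne'
    have := h1.add h2
    exact this.congr_deriv (by field_simp; ring)
  have hG''nonneg : ∀ x, 0 ≤ 1 / 4 - p * (1 - p) * Real.exp (-x) / (D x) ^ 2 := by
    intro x
    have hD2 : 0 < (D x) ^ 2 := pow_pos (hD x) 2
    rw [sub_nonneg, div_le_iff₀ hD2]
    have : (D x) ^ 2 = ((1 - p) + p * Real.exp (-x)) ^ 2 := rfl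
    nlinarith [sq_nonneg ((1 - p) - p * Real.exp (-x)), Real.exp_pos (-x)]
  have hG'mono : Monotone G' := by
    apply monotone_of_deriv_nonneg
    · exact fun x => (hG'deriv x).differentiableAt
    · intro x
      rw [(hG'deriv x).deriv]
      exact hG''nonneg x
  have hG'0 : G' 0 = 0 := by
    simp [hG'def, hDdef]
  have hG'nonneg : ∀ x ∈ Set.Ici (0:ℝ), 0 ≤ G' x := by
    intro x hx
    rw [← hG'0]
    exact hG'mono hx
  have hGmono : MonotoneOn G (Set.Ici 0) := by
    apply monotoneOn_of_deriv_nonneg (convex_Ici 0)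
    · exact fun x _ => ((hGderiv x).differentiableAt).continuousAt.continuousWithinAt
    · exact fun x _ => ((hGderiv x).differentiableAt).differentiableWithinAt
    · intro x hx
      rw [(hGderiv x).deriv]
      exact hG'nonneg x (le_of_lt (by simpa using hx))
  have hG0 : G 0 = 0 := by simp [hGdef, hDdef]
  have := hGmono (Set.self_mem_Ici) (a := 0) (b := h) hh hh
  rw [hG0] at this
  have hGle : 0 ≤ h ^ 2 / 8 - p * h - Real.log (D h) := this
  have : Real.log (D h) ≤ -p * h + h ^ 2 / 8 := by linarith
  simpa [hDdef] using this

lemma finHoeffding {n : ℕ} (p x : Fin n → ℝ) (hp : ∀ j, 0 ≤ p j) (hsum : ∑ j, p j = 1)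
    (M : ℝ) (hM : 0 < M) (hx : ∀ j, x j ∈ Set.Icc (0:ℝ) M) (η : ℝ) (hη : 0 ≤ η) :
    Real.log (∑ j, p j * Real.exp (-η * x j))
      ≤ -η * (∑ j, p j * x j) + (η * M) ^ 2 / 8 := by
  set m : ℝ := ∑ j, p j * x j with hm
  have hm0 : 0 ≤ m := Finset.sum_nonneg fun j _ => mul_nonneg (hp j) (hx j).1
  have hmM : m ≤ M := by
    calc m ≤ ∑ j, p j * M := Finset.sum_le_sum fun j _ =>
            mul_le_mul_of_nonneg_left (hx j).2 (hp j)
    _ = M := by rw [← Finset.sum_mul, hsum, one_mul]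
  have key : ∀ j, Real.exp (-η * x j)
      ≤ (1 - x j / M) + (x j / M) * Real.exp (-(η * M)) := by
    intro j
    have ha : 0 ≤ 1 - x j / M := by
      rw [sub_nonneg, div_le_one hM]; exact (hx j).2
    have hb : 0 ≤ x j / M := div_nonneg (hx j).1 hM.le
    have hab : (1 - x j / M) + x j / M = 1 := by ring
    have := convexOn_exp.2 (Set.mem_univ (0:ℝ)) (Set.mem_univ (-(η * M))) ha hb hab
    simp only [smul_eq_mul, mul_zero, zero_add, Real.exp_zero, mul_one] at this
    have harg : x j / M * -(η * M) = -η * x j := by field_simp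
    rw [harg] at this
    linarith
  have hsumle : (∑ j, p j * Real.exp (-η * x j))
      ≤ 1 - m / M + (m / M) * Real.exp (-(η * M)) := by
    calc (∑ j, p j * Real.exp (-η * x j))
        ≤ ∑ j, p j * ((1 - x j / M) + (x j / M) * Real.exp (-(η * M))) :=
          Finset.sum_le_sum fun j _ => mul_le_mul_of_nonneg_left (key j) (hp j)
      _ = 1 - m / M + (m / M) * Real.exp (-(η * M)) := by
          have e : ∀ j, p j * ((1 - x j / M) + (x j / M) * Real.exp (-(η * M)))
              = p j - (p j * x j) / M + (p j * x j) / M * Real.exp (-(η * M)) :=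
            fun j => by field_simp
          rw [Finset.sum_congr rfl (fun j _ => e j), Finset.sum_add_distrib,
            Finset.sum_sub_distrib, hsum, ← Finset.sum_div, ← Finset.sum_mul,
            ← Finset.sum_div, ← hm]
  have hpos : 0 < ∑ j, p j * Real.exp (-η * x j) := by
    have : ∃ j ∈ Finset.univ, p j ≠ 0 :=
      Finset.exists_ne_zero_of_sum_ne_zero (by rw [hsum]; norm_num)
    obtain ⟨j, _, hj⟩ := this
    refine Finset.sum_pos' (fun i _ => mul_nonneg (hp i) (Real.exp_pos _).le) ⟨j, Finset.mem_univ j, ?_⟩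
    exact mul_pos (lt_of_le_of_ne (hp j) (Ne.symm hj)) (Real.exp_pos _)
  have hq0 : 0 ≤ m / M := div_nonneg hm0 hM.le
  have hq1 : m / M ≤ 1 := (div_le_one hM).2 hmM
  have hcore := hoeffding_core (m / M) hq0 hq1 (η * M) (mul_nonneg hη hM.le)
  calc Real.log (∑ j, p j * Real.exp (-η * x j))
      ≤ Real.log (1 - m / M + (m / M) * Real.exp (-(η * M))) :=
        Real.log_le_log hpos hsumle
    _ ≤ -(m / M) * (η * M) + (η * M) ^ 2 / 8 := hcore
    _ = -η * m + (η * M) ^ 2 / 8 := by field_simp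

lemma mwu_softmax {n : ℕ} (hn : 0 < n) (T : ℕ) (η : ℝ) (K : ℕ → Fin n → ℝ)
    (w : ℕ → Fin n → ℝ) (hw0 : ∀ i, w 0 i = 1 / n)
    (hrec : ∀ t < T, ∀ i, w (t + 1) i
      = w t i * Real.exp (-η * K t i) / ∑ j, w t j * Real.exp (-η * K t j)) :
    ∀ t ≤ T, ∀ i, w t i = Real.exp (-η * ∑ s ∈ Finset.range t, K s i)
      / ∑ j, Real.exp (-η * ∑ s ∈ Finset.range t, K s j) := by
  intro t
  induction t with
  | zero =>
    intro _ i
    simp only [Finset.range_zero, Finset.sum_empty, mul_zero, Real.exp_zero]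
    rw [hw0 i]
    simp [Finset.card_univ]
  | succ t ih =>
    intro ht i
    have htT : t < T := ht
    have ihw := ih (le_of_lt htT)
    set E : ℕ → Fin n → ℝ := fun t i => Real.exp (-η * ∑ s ∈ Finset.range t, K s i) with hE
    have hEpos : ∀ t i, 0 < E t i := fun t i => Real.exp_pos _
    set Z : ℕ → ℝ := fun t => ∑ j, E t j with hZ
    have hZpos : ∀ t, 0 < Z t := fun t =>
      Finset.sum_pos (fun j _ => hEpos t j) (Finset.univ_nonempty_iff.2 (Fin.pos_iff_nonempty.mp hn))
    have hEstep : ∀ i, E (t + 1) i = E t i * Real.exp (-η * K t i) := by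
      intro i
      rw [hE]
      simp only
      rw [Finset.sum_range_succ, show -η * ((∑ s ∈ Finset.range t, K s i) + K t i)
        = -η * ∑ s ∈ Finset.range t, K s i + -η * K t i by ring, Real.exp_add]
    rw [hrec t htT i]
    have hwt : ∀ j, w t j = E t j / Z t := fun j => ihw j
    rw [hwt i]
    have hsum : (∑ j, w t j * Real.exp (-η * K t j))
        = (∑ j, E t j * Real.exp (-η * K t j)) / Z t := by
      rw [Finset.sum_div]
      exact Finset.sum_congr rfl fun j _ => by rw [hwt j]; ring
    rw [hsum]
    have hb : 0 < ∑ j, E t j * Real.exp (-η * K t j) :=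
      Finset.sum_pos (fun j _ => mul_pos (hEpos t j) (Real.exp_pos _))
        (Finset.univ_nonempty_iff.2 (Fin.pos_iff_nonempty.mp hn))
    have : (∑ j, E (t+1) j) = ∑ j, E t j * Real.exp (-η * K t j) :=
      Finset.sum_congr rfl fun j _ => hEstep j
    show E t i / Z t * Real.exp (-η * K t i)
        / ((∑ j, E t j * Real.exp (-η * K t j)) / Z t) = E (t+1) i / Z (t+1)
    rw [show Z (t+1) = ∑ j, E (t+1) j from rfl, hEstep i, this]
    field_simp
    rw [mul_comm (Z t), mul_div_mul_right _ _ (hZpos t).ne']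

lemma mwu_bound {n : ℕ} (hn : 0 < n) (T : ℕ) (η M : ℝ) (hη : 0 ≤ η) (hM : 0 < M)
    (K : ℕ → Fin n → ℝ) (hK : ∀ s i, K s i ∈ Set.Icc (0:ℝ) M)
    (w : ℕ → Fin n → ℝ)
    (hw : ∀ t ≤ T, ∀ i, w t i = Real.exp (-η * ∑ s ∈ Finset.range t, K s i)
      / ∑ j, Real.exp (-η * ∑ s ∈ Finset.range t, K s j)) :
    ∀ i, η * ((∑ t ∈ Finset.range T, ∑ j, K t j * w t j)
        - ∑ t ∈ Finset.range T, K t i)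
      ≤ Real.log n + T * (η * M) ^ 2 / 8 := by
  have hne : (Finset.univ : Finset (Fin n)).Nonempty :=
    Finset.univ_nonempty_iff.2 (Fin.pos_iff_nonempty.mp hn)
  set E : ℕ → Fin n → ℝ := fun t i => Real.exp (-η * ∑ s ∈ Finset.range t, K s i) with hE
  have hEpos : ∀ t i, 0 < E t i := fun t i => Real.exp_pos _
  set Z : ℕ → ℝ := fun t => ∑ j, E t j with hZ
  have hZpos : ∀ t, 0 < Z t := fun t => Finset.sum_pos (fun j _ => hEpos t j) hne
  have hwnn : ∀ t ≤ T, ∀ j, 0 ≤ w t j := by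
    intro t ht j
    rw [hw t ht j]
    exact div_nonneg (hEpos t j).le (hZpos t).le
  have hwsum : ∀ t ≤ T, ∑ j, w t j = 1 := by
    intro t ht
    have : ∑ j, w t j = (∑ j, E t j) / Z t := by
      rw [Finset.sum_div]
      exact Finset.sum_congr rfl fun j _ => hw t ht j
    rw [this]
    exact div_self (hZpos t).ne'
  have step : ∀ t < T, Real.log (Z (t + 1))
      ≤ Real.log (Z t) - η * (∑ j, K t j * w t j) + (η * M) ^ 2 / 8 := by
    intro t ht
    have hfact : Z (t + 1) = Z t * ∑ j, w t j * Real.exp (-η * K t j) := by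
      rw [hZ]
      simp only
      rw [Finset.mul_sum]
      refine Finset.sum_congr rfl fun j _ => ?_
      rw [hw t (le_of_lt ht) j, hE]
      simp only
      rw [Finset.sum_range_succ, show -η * ((∑ s ∈ Finset.range t, K s j) + K t j)
        = -η * ∑ s ∈ Finset.range t, K s j + -η * K t j by ring, Real.exp_add]
      field_simp
    have hspos : 0 < ∑ j, w t j * Real.exp (-η * K t j) := by
      refine Finset.sum_pos' (fun j _ => mul_nonneg (hwnn t ht.le j) (Real.exp_pos _).le) ?_
      obtain ⟨j, hj⟩ := hne
      have : ∃ j ∈ Finset.univ, w t j ≠ 0 :=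
        Finset.exists_ne_zero_of_sum_ne_zero (by rw [hwsum t ht.le]; norm_num)
      obtain ⟨j', hj', hj'ne⟩ := this
      exact ⟨j', hj', mul_pos (lt_of_le_of_ne (hwnn t ht.le j') (Ne.symm hj'ne)) (Real.exp_pos _)⟩
    rw [hfact, Real.log_mul (hZpos t).ne' hspos.ne']
    have hhoef := finHoeffding (fun j => w t j) (fun j => K t j)
      (fun j => hwnn t ht.le j) (hwsum t ht.le) M hM (fun j => hK t j) η hη
    have hcomm : (∑ j, K t j * w t j) = ∑ j, w t j * K t j :=
      Finset.sum_congr rfl fun j _ => mul_comm _ _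
    rw [hcomm]
    linarith
  have tele : ∀ u ≤ T, Real.log (Z u)
      ≤ Real.log (Z 0) - η * (∑ t ∈ Finset.range u, ∑ j, K t j * w t j)
        + u * (η * M) ^ 2 / 8 := by
    intro u
    induction u with
    | zero => intro _; simp
    | succ u ih =>
      intro hu
      have h1 := ih (le_of_lt hu)
      have h2 := step u hu
      rw [Finset.sum_range_succ]
      push_cast
      linarith
  intro i
  have hZT := tele T le_rfl
  have hZ0 : Real.log (Z 0) = Real.log n := by
    rw [hZ, hE]
    simp [Finset.card_univ]
  have hlow : -η * (∑ t ∈ Finset.range T, K t i) ≤ Real.log (Z T) := by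
    have h1 : E T i ≤ Z T := Finset.single_le_sum (fun j _ => (hEpos T j).le) (Finset.mem_univ i)
    have h2 : Real.log (E T i) = -η * ∑ t ∈ Finset.range T, K t i := Real.log_exp _
    rw [← h2]
    exact Real.log_le_log (hEpos T i) h1
  rw [hZ0] at hZT
  nlinarith [hZT, hlow]

/-- The MWU (exponentially weighted average) forecaster over n experts with learning rate
μ = √(8 log n / T) has regret at most √(T log n / 2) for losses in [0,1]; for losses
bounded by M (rescaling the rate by M) the regret is at most M·√(T log n / 2). -/
theorem stmt_17 (n T : ℕ) (hn : 2 ≤ n) (hT : 1 ≤ T)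
    (M : ℝ) (hM : 0 < M)
    (k : Fin T → Fin n → ℝ) (hk : ∀ t i, k t i ∈ Set.Icc (0 : ℝ) M)
    (μ : ℝ) (hμ : μ = Real.sqrt (8 * Real.log n / T))
    (w : ℕ → Fin n → ℝ) (hw0 : ∀ i, w 0 i = 1 / n)
    (hwrec : ∀ t : Fin T, ∀ i, w (t + 1) i
        = w t i * Real.exp (-(μ / M) * k t i)
          / ∑ j, w t j * Real.exp (-(μ / M) * k t j)) :
    ∀ i : Fin n, (∑ t, ∑ j, k t j * w t j) - ∑ t, k t i
      ≤ M * Real.sqrt (T * Real.log n / 2) := by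
  intro i
  have hn0 : 0 < n := by omega
  have hn1 : (1 : ℝ) < n := by exact_mod_cast (by omega : 1 < n)
  have hlogn : 0 < Real.log n := Real.log_pos hn1
  have hT0 : (0 : ℝ) < T := by exact_mod_cast (by omega : 0 < T)
  have hμpos : 0 < μ := by
    rw [hμ]
    exact Real.sqrt_pos.2 (div_pos (by linarith) hT0)
  set η : ℝ := μ / M with hηdef
  have hη : 0 < η := div_pos hμpos hM
  set K : ℕ → Fin n → ℝ := fun s i => if h : s < T then k ⟨s, h⟩ i else 0 with hKdef
  have hKmem : ∀ s i, K s i ∈ Set.Icc (0:ℝ) M := by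
    intro s j
    rw [hKdef]
    by_cases h : s < T
    · simp only [dif_pos h]; exact hk ⟨s, h⟩ j
    · simp only [dif_neg h]; exact ⟨le_refl 0, hM.le⟩
  have hKeq : ∀ (t : Fin T) (j : Fin n), K (t : ℕ) j = k t j := by
    intro t j
    rw [hKdef]
    simp only [dif_pos t.isLt]
  have hrec' : ∀ t < T, ∀ j, w (t + 1) j
      = w t j * Real.exp (-η * K t j) / ∑ l, w t l * Real.exp (-η * K t l) := by
    intro t ht j
    have := hwrec ⟨t, ht⟩ j
    simpa [hKeq ⟨t, ht⟩, neg_mul] using this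
  have hsoftmax := mwu_softmax hn0 T η K w hw0 hrec'
  have hbound := mwu_bound hn0 T η M hη.le hM K hKmem w hsoftmax i
  have hfin1 : (∑ t, ∑ j, k t j * w (t : ℕ) j)
      = ∑ t ∈ Finset.range T, ∑ j, K t j * w t j := by
    rw [← Fin.sum_univ_eq_sum_range (fun t => ∑ j, K t j * w t j) T]
    exact Finset.sum_congr rfl fun t _ => Finset.sum_congr rfl fun j _ => by
      rw [hKeq t j]
  have hfin2 : (∑ t, k t i) = ∑ t ∈ Finset.range T, K t i := by
    rw [← Fin.sum_univ_eq_sum_range (fun t => K t i) T]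
    exact Finset.sum_congr rfl fun t _ => by rw [hKeq t i]
  rw [hfin1, hfin2]
  have hηM : η * M = μ := div_mul_cancel₀ μ hM.ne'
  have hμsq : μ ^ 2 = 8 * Real.log n / T := by
    rw [hμ]
    exact Real.sq_sqrt (le_of_lt (div_pos (by linarith) hT0))
  have hrhs : Real.log n + (T : ℝ) * (η * M) ^ 2 / 8 = 2 * Real.log n := by
    rw [hηM, hμsq]
    field_simp
    ring
  rw [hrhs] at hbound
  have hR : (∑ t ∈ Finset.range T, ∑ j, K t j * w t j) - ∑ t ∈ Finset.range T, K t i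
      ≤ 2 * Real.log n / η := by
    rw [le_div_iff₀ hη]
    linarith [hbound]
  have hsqrt : Real.sqrt ((T : ℝ) * Real.log n / 2) = 2 * Real.log n / μ := by
    have hpos : 0 ≤ 2 * Real.log n / μ := by positivity
    have hkey : (T : ℝ) * Real.log n / 2 = (2 * Real.log n / μ) ^ 2 := by
      rw [div_pow, hμsq]
      field_simp
      ring
    rw [hkey, Real.sqrt_sq hpos]
  rw [hsqrt]
  have hfin : 2 * Real.log n / η = M * (2 * Real.log n / μ) := by
    rw [hηdef]
    field_simp
  linarith [hR, hfin.le]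
end

section
/- Suppose for each of k windows the algorithm's regret against the best response within the window's restricted action set is at most 3τ(√(2|T_i| log i) + (log i)/8), and the restricted best response is within ε of the global best response in average loss per round (i.e., min over restricted set minus min over full set is at most ε·|T_i|). Then the average regret against the globally best fixed point is at most ε + 3τ(√(2k·log(k)/T) + k·log(k)/(8T)) per round; in particular as T → ∞ the time-averaged pair of strategies is an ε-Nash equilibrium. -/
open Real

/-!
On window `i` the learner loses at most the window regret bound plus `ε |T_i|` more than any
fixed `d ∈ D`, since the restricted best response is `ε |T_i|`-close to the global one. Summing
over the windows, with `log (i + 1) ≤ log k` and Cauchy–Schwarz `∑ √|T_i| ≤ √(k T)`, the total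
regret against every `d ∈ D` is at most `(ε + δ) T`. By bilinearity, after dividing by `T` this
reads `⟨l̄, d⟩ ≥ v - (ε + δ)` for the average loss `v`, and the adversary's no-regret bound reads
`⟨l, d̄⟩ ≤ v + √(log L / (2T))` for every `l ∈ ΔL`. Two such one-sided bounds at points
`l̄ ∈ ΔL`, `d̄ ∈ D` (convexity) already make `(l̄, d̄)` an approximate saddle point.
-/

open Finset Matrix

lemma dot_eq_dotProduct {n : ℕ} (x y : Fin n → ℝ) : dot x y = x ⬝ᵥ y := rfl

lemma continuous_dot_left {n : ℕ} (y : Fin n → ℝ) : Continuous fun x : Fin n → ℝ => dot x y :=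
  continuous_id.dotProduct continuous_const

lemma continuous_dot_right {n : ℕ} (x : Fin n → ℝ) : Continuous fun y : Fin n → ℝ => dot x y :=
  continuous_const.dotProduct continuous_id

lemma fun_mul_sum_eq_smul_sum {ι : Type*} {n : ℕ} (c : ℝ) (s : Finset ι) (v : ι → Fin n → ℝ) :
    (fun j => c * ∑ t ∈ s, v t j) = c • ∑ t ∈ s, v t := by
  ext j
  simp [Finset.sum_apply]

lemma dot_mul_sum_left {ι : Type*} {n : ℕ} (c : ℝ) (s : Finset ι) (v : ι → Fin n → ℝ)
    (y : Fin n → ℝ) : dot (fun j => c * ∑ t ∈ s, v t j) y = c * ∑ t ∈ s, dot (v t) y := by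
  simp only [fun_mul_sum_eq_smul_sum, dot_eq_dotProduct, smul_dotProduct, sum_dotProduct,
    smul_eq_mul]

lemma dot_mul_sum_right {ι : Type*} {n : ℕ} (c : ℝ) (s : Finset ι) (v : ι → Fin n → ℝ)
    (x : Fin n → ℝ) : dot x (fun j => c * ∑ t ∈ s, v t j) = c * ∑ t ∈ s, dot x (v t) := by
  simp only [fun_mul_sum_eq_smul_sum, dot_eq_dotProduct, dotProduct_smul, dotProduct_sum,
    smul_eq_mul]

lemma Convex.one_div_card_smul_sum_mem {E ι : Type*} [AddCommGroup E] [Module ℝ E] {s : Set E}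
    (hs : Convex ℝ s) {t : Finset ι} (ht : t.Nonempty) {v : ι → E} (hv : ∀ i ∈ t, v i ∈ s) :
    (1 / #t : ℝ) • ∑ i ∈ t, v i ∈ s := by
  rw [smul_sum]
  refine hs.sum_mem (fun _ _ => by positivity) ?_ hv
  simp [ht.card_ne_zero]

lemma sqrt_div_mul_self_eq (a : ℝ) {T : ℝ} (hT : 0 < T) : √(a / T) * T = √(a * T) :=
  calc √(a / T) * T = √(a / T) * √(T ^ 2) := by rw [sqrt_sq hT.le]
    _ = √(a / T * T ^ 2) := (sqrt_mul' _ (sq_nonneg T)).symm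
    _ = √(a * T) := by congr 1; field_simp

lemma sum_sqrt_le_sqrt_card_mul_sum {ι : Type*} (s : Finset ι) {f : ι → ℝ} (hf : ∀ i, 0 ≤ f i) :
    ∑ i ∈ s, √(f i) ≤ √(#s * ∑ i ∈ s, f i) := by
  simpa [sqrt_mul', mul_comm] using sum_sqrt_mul_sqrt_le s hf fun _ => zero_le_one

lemma sum_window_bounds_le {k : ℕ} {τ : ℝ} (hτ : 0 ≤ τ) (m : Fin k → ℕ) :
    ∑ i : Fin k, 3 * τ * (√(2 * m i * log ((i : ℕ) + 1)) + log ((i : ℕ) + 1) / 8)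
      ≤ 3 * τ * (√(2 * k * (∑ i : Fin k, (m i : ℝ)) * log k) + k * log k / 8) := by
  have hlog : ∀ i : Fin k, log ((i : ℕ) + 1) ≤ log k := fun i =>
    log_le_log (by positivity) (by exact_mod_cast i.isLt)
  have hsqrt : ∑ i : Fin k, √(2 * m i * log ((i : ℕ) + 1))
      ≤ √(2 * k * (∑ i : Fin k, (m i : ℝ)) * log k) :=
    calc _ ≤ ∑ i : Fin k, √(2 * log k * m i) :=
          sum_le_sum fun i _ => sqrt_le_sqrt (by nlinarith [hlog i, (m i).cast_nonneg (α := ℝ)])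
      _ ≤ √(k * ∑ i : Fin k, 2 * log k * m i) := by
          have := sum_sqrt_le_sqrt_card_mul_sum univ (f := fun i : Fin k => 2 * log k * m i)
            fun i => by positivity
          rwa [card_univ, Fintype.card_fin] at this
      _ = _ := by rw [← mul_sum]; ring_nf
  have hlogsum : ∑ i : Fin k, log ((i : ℕ) + 1) / 8 ≤ k * log k / 8 :=
    calc _ ≤ ∑ _i : Fin k, log k / 8 := sum_le_sum fun i _ => by linarith [hlog i]
      _ = _ := by
          rw [sum_const, card_univ, Fintype.card_fin, nsmul_eq_mul]
          ring
  rw [← mul_sum, sum_add_distrib]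
  gcongr

lemma sum_le_sum_of_partition {ι α : Type*} [Fintype ι] [DecidableEq α] {s : Finset α}
    (W : ι → Finset α) (hdisj : ∀ i j, i ≠ j → Disjoint (W i) (W j))
    (hcover : univ.biUnion W = s) {g : α → ℝ} {b : ι → ℝ} (h : ∀ i, ∑ t ∈ W i, g t ≤ b i) :
    ∑ t ∈ s, g t ≤ ∑ i, b i := by
  rw [← hcover, sum_biUnion fun i _ j _ hij => hdisj i j hij]
  exact sum_le_sum fun i _ => h i

lemma sum_card_eq_of_partition {ι α : Type*} [Fintype ι] [DecidableEq α] {s : Finset α}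
    (W : ι → Finset α) (hdisj : ∀ i j, i ≠ j → Disjoint (W i) (W j))
    (hcover : univ.biUnion W = s) : ∑ i, (#(W i) : ℝ) = #s := by
  rw [← hcover, card_biUnion fun i _ j _ hij => hdisj i j hij]
  push_cast
  rfl

lemma sub_le_of_sub_sInf_le {E : Type*} {f : E → ℝ} {A D : Set E} (hD : BddBelow (f '' D))
    {a r e : ℝ} (hreg : a - sInf (f '' A) ≤ r) (hbr : sInf (f '' A) - sInf (f '' D) ≤ e)
    {x : E} (hx : x ∈ D) : a - f x ≤ r + e := by
  have := csInf_le hD ⟨x, hx, rfl⟩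
  linarith

theorem approxNash_of_regret_bounds {α β : Type*} {f : α → β → ℝ} {P : Set α} {Q : Set β}
    {x : α} {y : β} {v a b : ℝ} (hx : x ∈ P) (hy : y ∈ Q) (hQ : BddBelow (f x '' Q))
    (hP : BddAbove ((f · y) '' P)) (hmin : ∀ q ∈ Q, v - a ≤ f x q)
    (hmax : ∀ p ∈ P, f p y ≤ v + b) :
    v - sInf (f x '' Q) ≤ a ∧ sSup ((f · y) '' P) - (a + b) ≤ f x y ∧
      f x y ≤ sInf (f x '' Q) + (a + b) := by
  have hinf : v - a ≤ sInf (f x '' Q) :=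
    le_csInf ⟨_, y, hy, rfl⟩ (by rintro _ ⟨q, hq, rfl⟩; exact hmin q hq)
  have hsup : sSup ((f · y) '' P) ≤ v + b :=
    csSup_le ⟨_, x, hx, rfl⟩ (by rintro _ ⟨p, hp, rfl⟩; exact hmax p hp)
  have hxy_ge : sInf (f x '' Q) ≤ f x y := csInf_le hQ ⟨y, hy, rfl⟩
  have hxy_le : f x y ≤ sSup ((f · y) '' P) := le_csSup hP ⟨x, hx, rfl⟩
  exact ⟨by linarith, by linarith, by linarith⟩

lemma sum_dot_sub_le_of_window_regret {n k T : ℕ} {D : Set (Fin n → ℝ)} (hD : IsCompact D)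
    (W : Fin k → Finset ℕ) (hdisj : ∀ i j, i ≠ j → Disjoint (W i) (W j))
    (hcover : univ.biUnion W = range T) (l d : ℕ → Fin n → ℝ) (A : Fin k → Set (Fin n → ℝ))
    (R : Fin k → ℝ) (ε : ℝ)
    (hwinreg : ∀ i, (∑ t ∈ W i, dot (l t) (d t))
      - sInf ((fun d' => ∑ t ∈ W i, dot (l t) d') '' A i) ≤ R i)
    (hεbr : ∀ i, sInf ((fun d' => ∑ t ∈ W i, dot (l t) d') '' A i)
      - sInf ((fun d' => ∑ t ∈ W i, dot (l t) d') '' D) ≤ ε * #(W i))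
    {d' : Fin n → ℝ} (hd' : d' ∈ D) :
    ∑ t ∈ range T, dot (l t) (d t) - ∑ t ∈ range T, dot (l t) d' ≤ ∑ i, R i + ε * T := by
  have hwin : ∀ i, ∑ t ∈ W i, (dot (l t) (d t) - dot (l t) d') ≤ R i + ε * #(W i) := fun i => by
    rw [sum_sub_distrib]
    refine sub_le_of_sub_sInf_le ?_ (hwinreg i) (hεbr i) hd'
    exact (hD.image (continuous_finsetSum _ fun t _ => continuous_dot_right (l t))).bddBelow
  have htotal := sum_le_sum_of_partition W hdisj hcover hwin
  rwa [sum_add_distrib, ← mul_sum, sum_card_eq_of_partition W hdisj hcover, card_range,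
    sum_sub_distrib] at htotal

lemma one_div_mul_sub_le_of_sub_le_mul {T S S' c : ℝ} (hT : 0 < T) (h : S - S' ≤ c * T) :
    1 / T * S - c ≤ 1 / T * S' := by
  have := div_le_div_of_nonneg_right h hT.le
  field_simp at this ⊢
  linarith

lemma dot_average_right_le_of_regret {n T : ℕ} {ΔL : Set (Fin n → ℝ)} (hΔL : IsCompact ΔL)
    (hT : (0 : ℝ) < T) (l d : ℕ → Fin n → ℝ) {r : ℝ}
    (hadv : sSup ((fun l' => ∑ t ∈ range T, dot l' (d t)) '' ΔL)
      - ∑ t ∈ range T, dot (l t) (d t) ≤ √(T * r / 2))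
    {l' : Fin n → ℝ} (hl' : l' ∈ ΔL) :
    dot l' (fun i => (1 / T : ℝ) * ∑ t ∈ range T, d t i)
      ≤ 1 / T * ∑ t ∈ range T, dot (l t) (d t) + √(r / (2 * T)) := by
  have hsup := le_csSup (hΔL.image (continuous_finsetSum (range T) fun t _ =>
    continuous_dot_left (d t))).bddAbove ⟨l', hl', rfl⟩
  have hscale : √(T * r / 2) = √(r / (2 * T)) * T := by
    rw [← div_div, sqrt_div_mul_self_eq _ hT]
    ring_nf
  rw [dot_mul_sum_right]
  calc 1 / T * ∑ t ∈ range T, dot l' (d t)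
      ≤ 1 / T * (∑ t ∈ range T, dot (l t) (d t) + √(r / (2 * T)) * T) := by
        gcongr
        linarith
    _ = _ := by field_simp

theorem stmt_19_general {n : ℕ} (ΔL D : Set (Fin n → ℝ))
    (hΔLcomp : IsCompact ΔL) (hΔLconv : Convex ℝ ΔL)
    (hDcomp : IsCompact D) (hDconv : Convex ℝ D)
    (τ ε : ℝ) (hτ : 0 < τ)
    (L k T : ℕ) (hT : 0 < T)
    (W : Fin k → Finset ℕ)
    (hdisj : ∀ i j, i ≠ j → Disjoint (W i) (W j))
    (hcover : Finset.univ.biUnion W = Finset.range T)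
    (l : ℕ → Fin n → ℝ) (hl : ∀ t, l t ∈ ΔL)
    (d : ℕ → Fin n → ℝ) (hd : ∀ t, d t ∈ D)
    (A : Fin k → Set (Fin n → ℝ))
    (hwinreg : ∀ i : Fin k,
        (∑ t ∈ W i, dot (l t) (d t))
          - sInf ((fun d' => ∑ t ∈ W i, dot (l t) d') '' A i)
        ≤ 3 * τ * (Real.sqrt (2 * (W i).card * Real.log ((i : ℕ) + 1))
            + Real.log ((i : ℕ) + 1) / 8))
    (hεbr : ∀ i : Fin k,
        sInf ((fun d' => ∑ t ∈ W i, dot (l t) d') '' A i)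
          - sInf ((fun d' => ∑ t ∈ W i, dot (l t) d') '' D) ≤ ε * (W i).card)
    (hadv : sSup ((fun l' => ∑ t ∈ Finset.range T, dot l' (d t)) '' ΔL)
        - ∑ t ∈ Finset.range T, dot (l t) (d t) ≤ Real.sqrt (T * Real.log L / 2))
    (lbar dbar : Fin n → ℝ)
    (hlbar : lbar = fun i => (1 / T : ℝ) * ∑ t ∈ Finset.range T, l t i)
    (hdbar : dbar = fun i => (1 / T : ℝ) * ∑ t ∈ Finset.range T, d t i)
    (δ : ℝ) (hδ : δ = 3 * τ * (Real.sqrt (2 * k * Real.log k / T)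
        + k * Real.log k / (8 * T))) :
    ((1 / T : ℝ) * ∑ t ∈ Finset.range T, dot (l t) (d t)
        - sInf ((fun d' => dot lbar d') '' D) ≤ ε + δ) ∧
    (sSup ((fun l' => dot l' dbar) '' ΔL) - (ε + δ + Real.sqrt (Real.log L / (2 * T)))
        ≤ dot lbar dbar) ∧
    (dot lbar dbar
        ≤ sInf ((fun d' => dot lbar d') '' D) + (ε + δ + Real.sqrt (Real.log L / (2 * T)))) := by
  have hT0 : (0 : ℝ) < T := by exact_mod_cast hT
  have hrange : (range T).Nonempty := nonempty_range_iff.2 hT.ne'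
  have hlbar_mem : lbar ∈ ΔL := by
    simpa [hlbar, fun_mul_sum_eq_smul_sum] using
      hΔLconv.one_div_card_smul_sum_mem hrange fun t _ => hl t
  have hdbar_mem : dbar ∈ D := by
    simpa [hdbar, fun_mul_sum_eq_smul_sum] using
      hDconv.one_div_card_smul_sum_mem hrange fun t _ => hd t
  have hδT : δ * T = 3 * τ * (√(2 * k * T * log k) + k * log k / 8) := by
    rw [hδ, mul_assoc, add_mul, sqrt_div_mul_self_eq _ hT0]
    field_simp
  have hmin : ∀ d' ∈ D, 1 / T * ∑ t ∈ range T, dot (l t) (d t) - (ε + δ) ≤ dot lbar d' := by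
    intro d' hd'
    have hreg := sum_dot_sub_le_of_window_regret hDcomp W hdisj hcover l d A _ ε hwinreg hεbr hd'
    have hR := sum_window_bounds_le hτ.le fun i => #(W i)
    rw [sum_card_eq_of_partition W hdisj hcover, card_range] at hR
    rw [hlbar, dot_mul_sum_left]
    exact one_div_mul_sub_le_of_sub_le_mul hT0 (by linarith)
  have hmax : ∀ l' ∈ ΔL,
      dot l' dbar ≤ 1 / T * ∑ t ∈ range T, dot (l t) (d t) + √(log L / (2 * T)) := fun l' hl' =>
    hdbar ▸ dot_average_right_le_of_regret hΔLcomp hT0 l d hadv hl'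
  exact approxNash_of_regret_bounds hlbar_mem hdbar_mem
    (hDcomp.image (continuous_dot_right lbar)).bddBelow
    (hΔLcomp.image (continuous_dot_left dbar)).bddAbove hmin hmax

/-- With ε-best responses: if in each of k windows the regret against the best point of the
window's restricted set is at most 3τ(√(2|T_i| log i) + (log i)/8), the restricted best
response is ε|T_i|-close to the global one, and the adversary is no-regret, then the
per-round regret against the globally best fixed point is at most ε + δ(T) with
δ(T) = 3τ(√(2k log k/T) + k log k/(8T)); consequently the pair of time averages is an
(ε + δ(T) + √(log L/(2T)))-Nash equilibrium, hence an ε-Nash equilibrium as T → ∞. -/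
theorem stmt_19 {n : ℕ} (ΔL D : Set (Fin n → ℝ))
    (hΔLcomp : IsCompact ΔL) (hΔLconv : Convex ℝ ΔL) (hΔLne : ΔL.Nonempty)
    (hDcomp : IsCompact D) (hDconv : Convex ℝ D) (hDne : D.Nonempty)
    (τ ε : ℝ) (hτ : 0 < τ) (hε : 0 ≤ ε)
    (L k T : ℕ) (hL : 1 ≤ L) (hk : 1 ≤ k) (hT : 0 < T)
    (W : Fin k → Finset ℕ)
    (hdisj : ∀ i j, i ≠ j → Disjoint (W i) (W j))
    (hcover : Finset.univ.biUnion W = Finset.range T)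
    (l : ℕ → Fin n → ℝ) (hl : ∀ t, l t ∈ ΔL)
    (d : ℕ → Fin n → ℝ) (hd : ∀ t, d t ∈ D)
    (A : Fin k → Set (Fin n → ℝ)) (hAne : ∀ i, (A i).Nonempty) (hAsub : ∀ i, A i ⊆ D)
    (hwinreg : ∀ i : Fin k,
        (∑ t ∈ W i, dot (l t) (d t))
          - sInf ((fun d' => ∑ t ∈ W i, dot (l t) d') '' A i)
        ≤ 3 * τ * (Real.sqrt (2 * (W i).card * Real.log ((i : ℕ) + 1))
            + Real.log ((i : ℕ) + 1) / 8))
    (hεbr : ∀ i : Fin k,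
        sInf ((fun d' => ∑ t ∈ W i, dot (l t) d') '' A i)
          - sInf ((fun d' => ∑ t ∈ W i, dot (l t) d') '' D) ≤ ε * (W i).card)
    (hadv : sSup ((fun l' => ∑ t ∈ Finset.range T, dot l' (d t)) '' ΔL)
        - ∑ t ∈ Finset.range T, dot (l t) (d t) ≤ Real.sqrt (T * Real.log L / 2))
    (lbar dbar : Fin n → ℝ)
    (hlbar : lbar = fun i => (1 / T : ℝ) * ∑ t ∈ Finset.range T, l t i)
    (hdbar : dbar = fun i => (1 / T : ℝ) * ∑ t ∈ Finset.range T, d t i)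
    (δ : ℝ) (hδ : δ = 3 * τ * (Real.sqrt (2 * k * Real.log k / T)
        + k * Real.log k / (8 * T))) :
    ((1 / T : ℝ) * ∑ t ∈ Finset.range T, dot (l t) (d t)
        - sInf ((fun d' => dot lbar d') '' D) ≤ ε + δ) ∧
    (sSup ((fun l' => dot l' dbar) '' ΔL) - (ε + δ + Real.sqrt (Real.log L / (2 * T)))
        ≤ dot lbar dbar) ∧
    (dot lbar dbar
        ≤ sInf ((fun d' => dot lbar d') '' D) + (ε + δ + Real.sqrt (Real.log L / (2 * T)))) :=
  stmt_19_general ΔL D hΔLcomp hΔLconv hDcomp hDconv τ ε hτ L k T hT W hdisj hcover l hl d hd A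
    hwinreg hεbr hadv lbar dbar hlbar hdbar δ hδ
end
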